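/- Normal-form bisimilarity coincides with machine bisimilarity of NFB machines: for all open lambda-terms t and s, t ~nf s if and only if there exists n > max(fv(t) ∪ fv(s)) such that <t | [] | n>_ev ~m <s | [] | n>_ev. -/

import Mathlib

/-! ### Open call-by-name lambda-terms (free variables are natural numbers)
and the KAM -/

/-- Lambda-terms: free variables `fvar f` (natural numbers) and bound variables
in de Bruijn representation. -/
inductive Term
  | fvar : ℕ → Term
  | bvar : ℕ → Term
  | lam : Term → Term
  | app : Term → Term → Term
  deriving DecidableEq

namespace Term

/-- Shift the de Bruijn indices `≥ k` by `d`. -/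
def liftT (d : ℕ) : ℕ → Term → Term
  | _, fvar f => fvar f
  | k, bvar n => if n < k then bvar n else bvar (n + d)
  | k, lam t => lam (liftT d (k + 1) t)
  | k, app t s => app (liftT d k t) (liftT d k s)

/-- Capture-avoiding substitution of `s` for the de Bruijn index `k`. -/
def substT : Term → ℕ → Term → Term
  | fvar f, _, _ => fvar f
  | bvar n, k, s => if n = k then liftT k 0 s else if k < n then bvar (n - 1) else bvar n
  | lam t, k, s => lam (substT t (k + 1) s)
  | app t u, k, s => app (substT t k s) (substT u k s)

/-- Free variables of a term. -/
def fv : Term → Finset ℕ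
  | fvar f => {f}
  | bvar _ => ∅
  | lam t => fv t
  | app t s => fv t ∪ fv s

end Term

/-- Stacks of the KAM. -/
inductive Stack
  | nil : Stack
  | cons : Term → Stack → Stack

/-- Configurations of the KAM. -/
structure KConf where
  t : Term
  π : Stack

/-- Transitions of the KAM. -/
inductive KStep : KConf → KConf → Prop
  | push {t s π} : KStep ⟨.app t s, π⟩ ⟨t, .cons s π⟩
  | grab {t s π} : KStep ⟨.lam t, .cons s π⟩ ⟨t.substT 0 s, π⟩

/-- Reflexive-transitive closure of KAM transitions. -/
def KSteps : KConf → KConf → Prop := Relation.ReflTransGen KStep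
/-! ### The NFB machine -/

/-- Flags of the NFB machine: `lam`, `done`, `enter`, `skip` and free variables
(natural numbers). -/
inductive NFlag
  | flam | fdone | fenter | fskip
  | fvarF : ℕ → NFlag
  deriving DecidableEq

/-- Labels of the NFB machine: `tau` or a flag. -/
inductive MLabel
  | tau : MLabel
  | flag : NFlag → MLabel

/-- Configurations of the NFB machine: evaluation mode `<t | π | n>_ev` and
continuation mode `<π | n>_cont`. -/
inductive NConf
  | ev : Term → Stack → ℕ → NConf
  | cont : Stack → ℕ → NConf

/-- Labeled transitions of the NFB machine. -/
inductive NStep : NConf → MLabel → NConf → Prop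
  | push {t s π n} : NStep (.ev (.app t s) π n) .tau (.ev t (.cons s π) n)
  | grab {t s π n} : NStep (.ev (.lam t) (.cons s π) n) .tau (.ev (t.substT 0 s) π n)
  | lambda {t n} : NStep (.ev (.lam t) .nil n) (.flag .flam)
      (.ev (t.substT 0 (.fvar n)) .nil (n + 1))
  | var {f π n} : NStep (.ev (.fvar f) π n) (.flag (.fvarF f)) (.cont π n)
  | enter {t π n} : NStep (.cont (.cons t π) n) (.flag .fenter) (.ev t .nil n)
  | skip {t π n} : NStep (.cont (.cons t π) n) (.flag .fskip) (.cont π n)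

/-- Terminating flagged transitions of the NFB machine (no target configuration). -/
inductive NFinal : NConf → NFlag → Prop
  | done {n} : NFinal (.cont .nil n) .fdone

/-- Silent transitions of the NFB machine. -/
def NTau (C C' : NConf) : Prop := NStep C .tau C'

/-- Flagged transitions of the NFB machine. -/
def NFlagStep (C : NConf) (F : NFlag) (C' : NConf) : Prop := NStep C (.flag F) C'
/-! ### Machine bisimilarity for flagged abstract machines -/

/-- Machine bisimulation for a flagged abstract machine given by silent steps
`tstep`, flagged steps `fstep`, and terminating flagged transitions `final`. -/
def IsMachineBisim {Conf Fl : Type} (tstep : Conf → Conf → Prop)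
    (fstep : Conf → Fl → Conf → Prop) (final : Conf → Fl → Prop)
    (R : Conf → Conf → Prop) : Prop :=
  Symmetric R ∧ ∀ C1 C2, R C1 C2 →
    (∀ (F : Fl) (C1' : Conf),
        (∃ C, Relation.ReflTransGen tstep C1 C ∧ fstep C F C1') →
        ∃ C2', (∃ C, Relation.ReflTransGen tstep C2 C ∧ fstep C F C2') ∧ R C1' C2') ∧
    (∀ F : Fl, (∃ C, Relation.ReflTransGen tstep C1 C ∧ final C F) →
        ∃ C, Relation.ReflTransGen tstep C2 C ∧ final C F)

/-- Machine bisimilarity: the largest machine bisimulation. -/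
def MachineBisim {Conf Fl : Type} (tstep : Conf → Conf → Prop)
    (fstep : Conf → Fl → Conf → Prop) (final : Conf → Fl → Prop)
    (C1 C2 : Conf) : Prop :=
  ∃ R, IsMachineBisim tstep fstep final R ∧ R C1 C2
/-! ### Normal-form bisimilarity (call-by-name) -/

/-- Extension of a relation on terms to stacks: pairwise related elements. -/
inductive StackRel (R : Term → Term → Prop) : Stack → Stack → Prop
  | nil : StackRel R .nil .nil
  | cons {t s π π'} : R t s → StackRel R π π' → StackRel R (.cons t π) (.cons s π')

/-- Normal-form bisimulation. -/
def IsNFBisim (R : Term → Term → Prop) : Prop :=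
  Symmetric R ∧ ∀ t s, R t s →
    (∀ t', KSteps ⟨t, .nil⟩ ⟨.lam t', .nil⟩ →
      ∃ s', KSteps ⟨s, .nil⟩ ⟨.lam s', .nil⟩ ∧
        ∀ f, f ∉ t'.fv ∪ s'.fv →
          R (t'.substT 0 (.fvar f)) (s'.substT 0 (.fvar f))) ∧
    (∀ f π, KSteps ⟨t, .nil⟩ ⟨.fvar f, π⟩ →
      ∃ π', KSteps ⟨s, .nil⟩ ⟨.fvar f, π'⟩ ∧ StackRel R π π')

/-- Normal-form bisimilarity: the largest normal-form bisimulation. -/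
def NFBisim (t s : Term) : Prop := ∃ R, IsNFBisim R ∧ R t s

/-!
Each direction builds a bisimulation of the other kind. From a normal-form bisimulation `R` one
gets the machine relation between `<u | [] | m>_ev` and `<v | [] | m>_ev` for `u R v`, and between
`<π | m>_cont` and `<π' | m>_cont` for stacks related by `R`, with the counter `m` above all free
variables: silent runs of the machine are KAM runs, and the counter is a fresh variable whenever a
`lam` flag has to be matched. Conversely, machine bisimilarity at a fresh counter is a normal-form
bisimulation, the `enter`/`skip` flags reading related stacks off element by element. The one
subtle point is the `lam` clause: the machine answers it for the single fresh variable `m`, while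
normal-form bisimulation asks for every fresh `f`. It is resolved by the invariance of machine
bisimilarity under renamings of free variables that are a shift from the counter on (the counter
being renamed too); such a renaming can fix everything below `m` and send `m` to `f`.
-/

open Relation Finset

namespace Term

def ren (ρ : ℕ → ℕ) : Term → Term
  | fvar f => fvar (ρ f)
  | bvar n => bvar n
  | lam t => lam (ren ρ t)
  | app t s => app (ren ρ t) (ren ρ s)

theorem ren_liftT (ρ : ℕ → ℕ) (d k : ℕ) (t : Term) :
    (liftT d k t).ren ρ = liftT d k (t.ren ρ) := by
  induction t generalizing k with
  | bvar n => simp only [liftT, ren]; split <;> rfl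
  | _ => simp_all [liftT, ren]

theorem ren_substT (ρ : ℕ → ℕ) (t : Term) (k : ℕ) (s : Term) :
    (t.substT k s).ren ρ = (t.ren ρ).substT k (s.ren ρ) := by
  induction t generalizing k with
  | bvar n => simp only [substT, ren]; split_ifs <;> simp [ren, ren_liftT]
  | _ => simp_all [substT, ren]

theorem ren_eq_self {ρ : ℕ → ℕ} {t : Term} (h : ∀ g ∈ t.fv, ρ g = g) : t.ren ρ = t := by
  induction t with
  | fvar f => simp [ren, h f (by simp [fv])]
  | bvar n => rfl
  | lam t ih => simp [ren, ih (by simpa [fv] using h)]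
  | app t u iht ihu =>
    simp only [fv, forall_mem_union] at h
    simp [ren, iht h.1, ihu h.2]

@[simp]
theorem fv_liftT (d k : ℕ) (t : Term) : (liftT d k t).fv = t.fv := by
  induction t generalizing k with
  | bvar n => simp only [liftT]; split <;> rfl
  | _ => simp_all [liftT, fv]

theorem fv_substT_subset (t : Term) (k : ℕ) (s : Term) : (t.substT k s).fv ⊆ t.fv ∪ s.fv := by
  induction t generalizing k with
  | fvar f => simp [substT, fv]
  | bvar n => simp only [substT]; split_ifs <;> simp [fv]
  | lam t ih => exact ih (k + 1)
  | app t u iht ihu =>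
    simp only [substT, fv]
    rw [union_union_distrib_right]
    exact union_subset_union (iht k) (ihu k)

theorem fv_substT_fvar_subset_range {t : Term} {f M : ℕ} (ht : t.fv ⊆ range M)
    (hf : f < M) : (t.substT 0 (fvar f)).fv ⊆ range M :=
  (fv_substT_subset t 0 _).trans (union_subset ht (by simpa [fv] using hf))

end Term

namespace Stack

def fv : Stack → Finset ℕ
  | nil => ∅
  | cons t π => t.fv ∪ π.fv

def ren (ρ : ℕ → ℕ) : Stack → Stack
  | nil => nil
  | cons t π => cons (t.ren ρ) (π.ren ρ)

end Stack

def KConf.fv (c : KConf) : Finset ℕ := c.t.fv ∪ c.π.fv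

theorem KStep.fv_subset {c c' : KConf} (h : KStep c c') : c'.fv ⊆ c.fv := by
  cases h with
  | push =>
    simp only [KConf.fv, Term.fv, Stack.fv, union_assoc, subset_refl]
  | @grab t s π =>
    simp only [KConf.fv, Term.fv, Stack.fv, ← union_assoc]
    exact union_subset_union (Term.fv_substT_subset t 0 s) subset_rfl

theorem KSteps.fv_subset {c c' : KConf} (h : KSteps c c') : c'.fv ⊆ c.fv := by
  induction h with
  | refl => exact subset_rfl
  | tail _ hstep ih => exact hstep.fv_subset.trans ih

theorem KSteps.fv_stack_subset {u t : Term} {π : Stack} (h : KSteps ⟨u, .nil⟩ ⟨t, π⟩) :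
    π.fv ⊆ u.fv := by
  simpa [KConf.fv, Stack.fv] using union_subset_right h.fv_subset

theorem KSteps.fv_lam_subset {u t : Term} (h : KSteps ⟨u, .nil⟩ ⟨.lam t, .nil⟩) :
    t.fv ⊆ u.fv := by
  simpa [KConf.fv, Stack.fv, Term.fv] using h.fv_subset

theorem KStep.nTau {c c' : KConf} (n : ℕ) (h : KStep c c') :
    NTau (.ev c.t c.π n) (.ev c'.t c'.π n) := by
  cases h with
  | push => exact .push
  | grab => exact .grab

theorem KSteps.nTaus {c c' : KConf} (n : ℕ) (h : KSteps c c') :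
    ReflTransGen NTau (.ev c.t c.π n) (.ev c'.t c'.π n) := by
  induction h with
  | refl => exact .refl
  | tail _ hstep ih => exact ih.tail (hstep.nTau n)

theorem kSteps_of_nTaus {t : Term} {π : Stack} {n : ℕ} {C : NConf}
    (h : ReflTransGen NTau (.ev t π n) C) :
    ∃ t' π', C = .ev t' π' n ∧ KSteps ⟨t, π⟩ ⟨t', π'⟩ := by
  induction h with
  | refl => exact ⟨t, π, rfl, .refl⟩
  | tail _ hstep ih =>
    obtain ⟨t', π', rfl, hk⟩ := ih
    cases hstep with
    | push => exact ⟨_, _, rfl, hk.tail .push⟩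
    | grab => exact ⟨_, _, rfl, hk.tail .grab⟩

theorem eq_of_nTaus_cont {π : Stack} {n : ℕ} {C : NConf}
    (h : ReflTransGen NTau (.cont π n) C) : C = .cont π n := by
  induction h with
  | refl => rfl
  | tail _ hstep ih => subst ih; cases hstep

section MachineBisim

variable {Conf Fl : Type} {tstep : Conf → Conf → Prop} {fstep : Conf → Fl → Conf → Prop}
  {final : Conf → Fl → Prop}

/-- The clauses of `IsMachineBisim` beyond symmetry, at one pair. -/
def Transfers (tstep : Conf → Conf → Prop) (fstep : Conf → Fl → Conf → Prop)
    (final : Conf → Fl → Prop) (R : Conf → Conf → Prop) (C1 C2 : Conf) : Prop :=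
  (∀ (F : Fl) (C1' : Conf), (∃ C, ReflTransGen tstep C1 C ∧ fstep C F C1') →
      ∃ C2', (∃ C, ReflTransGen tstep C2 C ∧ fstep C F C2') ∧ R C1' C2') ∧
    ∀ F : Fl, (∃ C, ReflTransGen tstep C1 C ∧ final C F) →
      ∃ C, ReflTransGen tstep C2 C ∧ final C F

theorem isMachineBisim_machineBisim :
    IsMachineBisim tstep fstep final (MachineBisim tstep fstep final) := by
  refine ⟨fun C1 C2 ⟨R, hR, h⟩ => ⟨R, hR, hR.1 h⟩, fun C1 C2 ⟨R, hR, h⟩ => ?_⟩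
  obtain ⟨hflag, hfinal⟩ := hR.2 C1 C2 h
  refine ⟨fun F C1' hC1' => ?_, hfinal⟩
  obtain ⟨C2', hC2', h'⟩ := hflag F C1' hC1'
  exact ⟨C2', hC2', R, hR, h'⟩

theorem MachineBisim.symm {C1 C2 : Conf} (h : MachineBisim tstep fstep final C1 C2) :
    MachineBisim tstep fstep final C2 C1 :=
  isMachineBisim_machineBisim.1 h

theorem MachineBisim.match_flag {C1 C2 C1' : Conf} {F : Fl}
    (h : MachineBisim tstep fstep final C1 C2)
    (h1 : ∃ C, ReflTransGen tstep C1 C ∧ fstep C F C1') :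
    ∃ C2', (∃ C, ReflTransGen tstep C2 C ∧ fstep C F C2') ∧
      MachineBisim tstep fstep final C1' C2' :=
  (isMachineBisim_machineBisim.2 C1 C2 h).1 F C1' h1

theorem MachineBisim.match_final {C1 C2 : Conf} {F : Fl}
    (h : MachineBisim tstep fstep final C1 C2)
    (h1 : ∃ C, ReflTransGen tstep C1 C ∧ final C F) :
    ∃ C, ReflTransGen tstep C2 C ∧ final C F :=
  (isMachineBisim_machineBisim.2 C1 C2 h).2 F h1

end MachineBisim

theorem StackRel.symm {R : Term → Term → Prop} (hR : ∀ ⦃t s⦄, R t s → R s t) {π π' : Stack}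
    (h : StackRel R π π') : StackRel R π' π := by
  induction h with
  | nil => exact .nil
  | cons hts _ ih => exact .cons (hR hts) ih

inductive MachineRelOf (R : Term → Term → Prop) : NConf → NConf → Prop
  | ev {u v : Term} {m : ℕ} : R u v → u.fv ⊆ range m → v.fv ⊆ range m →
      MachineRelOf R (.ev u .nil m) (.ev v .nil m)
  | cont {π π' : Stack} {m : ℕ} : StackRel R π π' → π.fv ⊆ range m → π'.fv ⊆ range m →
      MachineRelOf R (.cont π m) (.cont π' m)

namespace MachineRelOf

variable {R : Term → Term → Prop}

theorem transfers_ev (hR : IsNFBisim R) {u v : Term} {m : ℕ} (huv : R u v)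
    (hu : u.fv ⊆ range m) (hv : v.fv ⊆ range m) :
    Transfers NTau NFlagStep NFinal (MachineRelOf R) (.ev u .nil m) (.ev v .nil m) := by
  refine ⟨fun F C1' ⟨C, htau, hstep⟩ => ?_, fun F ⟨C, htau, hfinal⟩ => ?_⟩
  · obtain ⟨u', π, rfl, hu'⟩ := kSteps_of_nTaus htau
    cases hstep with
    | @lambda t' _ =>
      obtain ⟨s', hv', hR'⟩ := (hR.2 u v huv).1 t' hu'
      have ht' := hu'.fv_lam_subset.trans hu
      have hs' := hv'.fv_lam_subset.trans hv
      have hfresh : m ∉ t'.fv ∪ s'.fv := fun hm =>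
        notMem_range_self (union_subset ht' hs' hm)
      have hsucc : range m ⊆ range (m + 1) := range_subset_range.2 m.le_succ
      exact ⟨_, ⟨_, hv'.nTaus m, .lambda⟩, .ev (hR' m hfresh)
        (Term.fv_substT_fvar_subset_range (ht'.trans hsucc) m.lt_succ_self)
        (Term.fv_substT_fvar_subset_range (hs'.trans hsucc) m.lt_succ_self)⟩
    | @var f _ =>
      obtain ⟨π', hv', hπ⟩ := (hR.2 u v huv).2 f π hu'
      exact ⟨_, ⟨_, hv'.nTaus m, .var⟩,
        .cont hπ (hu'.fv_stack_subset.trans hu) (hv'.fv_stack_subset.trans hv)⟩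
  · obtain ⟨_, _, rfl, _⟩ := kSteps_of_nTaus htau
    cases hfinal

theorem transfers_cont {π π' : Stack} {m : ℕ} (hπ : StackRel R π π')
    (h : π.fv ⊆ range m) (h' : π'.fv ⊆ range m) :
    Transfers NTau NFlagStep NFinal (MachineRelOf R) (.cont π m) (.cont π' m) := by
  refine ⟨fun F C1' ⟨C, htau, hstep⟩ => ?_, fun F ⟨C, htau, hfinal⟩ => ?_⟩
  · obtain rfl := eq_of_nTaus_cont htau
    cases hπ with
    | nil => cases hstep
    | cons hab hψ =>
      obtain ⟨hhead, htail⟩ := union_subset_iff.1 h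
      obtain ⟨hhead', htail'⟩ := union_subset_iff.1 h'
      cases hstep with
      | enter => exact ⟨_, ⟨_, .refl, .enter⟩, .ev hab hhead hhead'⟩
      | skip => exact ⟨_, ⟨_, .refl, .skip⟩, .cont hψ htail htail'⟩
  · obtain rfl := eq_of_nTaus_cont htau
    cases hfinal
    cases hπ
    exact ⟨_, .refl, .done⟩

theorem isMachineBisim (hR : IsNFBisim R) :
    IsMachineBisim NTau NFlagStep NFinal (MachineRelOf R) := by
  refine ⟨fun C1 C2 h => ?_, fun C1 C2 h => ?_⟩
  · cases h with
    | ev huv hu hv => exact .ev (hR.1 huv) hv hu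
    | cont hπ h h' => exact .cont (hπ.symm hR.1) h' h
  · cases h with
    | ev huv hu hv => exact transfers_ev hR huv hu hv
    | cont hπ h h' => exact transfers_cont hπ h h'

end MachineRelOf

namespace NConf

def cnt : NConf → ℕ
  | ev _ _ n => n
  | cont _ n => n

def ren (ρ : ℕ → ℕ) : NConf → NConf
  | ev t π n => ev (t.ren ρ) (π.ren ρ) (ρ n)
  | cont π n => cont (π.ren ρ) (ρ n)

end NConf

def NFlag.ren (ρ : ℕ → ℕ) : NFlag → NFlag
  | fvarF f => fvarF (ρ f)
  | F => F

theorem cnt_eq_of_nTaus {C C' : NConf} (h : ReflTransGen NTau C C') : C'.cnt = C.cnt := by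
  induction h with
  | refl => rfl
  | tail _ hstep ih => cases hstep <;> exact ih

theorem NFlagStep.cnt_le {C C' : NConf} {F : NFlag} (h : NFlagStep C F C') :
    C.cnt ≤ C'.cnt := by
  cases h <;> simp [NConf.cnt]

section Renaming

variable {ρ : ℕ → ℕ}

theorem NTau.ren (ρ : ℕ → ℕ) {C C' : NConf} (h : NTau C C') : NTau (C.ren ρ) (C'.ren ρ) := by
  cases h with
  | push => exact .push
  | grab => simp only [NConf.ren, Term.ren, Stack.ren, Term.ren_substT]; exact .grab

theorem NTau.exists_of_ren {C D : NConf} (h : NTau (C.ren ρ) D) :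
    ∃ C', NTau C C' ∧ D = C'.ren ρ := by
  rcases C with ⟨_ | _ | _ | _, _ | _, _⟩ | ⟨_ | _, _⟩ <;> cases h
  · exact ⟨_, .grab, by simp [NConf.ren, Term.ren_substT]⟩
  · exact ⟨_, .push, rfl⟩
  · exact ⟨_, .push, rfl⟩

theorem nTaus_ren (ρ : ℕ → ℕ) {C C' : NConf} (h : ReflTransGen NTau C C') :
    ReflTransGen NTau (C.ren ρ) (C'.ren ρ) :=
  ReflTransGen.lift (NConf.ren ρ) (fun _ _ => NTau.ren ρ) _ _ h

theorem exists_nTaus_of_ren {C D : NConf} (h : ReflTransGen NTau (C.ren ρ) D) :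
    ∃ C', ReflTransGen NTau C C' ∧ D = C'.ren ρ := by
  induction h with
  | refl => exact ⟨C, .refl, rfl⟩
  | tail _ hstep ih =>
    obtain ⟨C', hC', rfl⟩ := ih
    obtain ⟨C'', hstep', rfl⟩ := hstep.exists_of_ren
    exact ⟨C'', hC'.tail hstep', rfl⟩

theorem NFlagStep.ren {C C' : NConf} {F : NFlag} (h : NFlagStep C F C')
    (hρ : ρ (C.cnt + 1) = ρ C.cnt + 1) : NFlagStep (C.ren ρ) (F.ren ρ) (C'.ren ρ) := by
  cases h with
  | lambda =>
    simp only [NConf.cnt] at hρ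
    simp only [NConf.ren, Term.ren, Stack.ren, Term.ren_substT, hρ]
    exact .lambda
  | var => exact .var
  | enter => exact .enter
  | skip => exact .skip

theorem NFlagStep.exists_of_ren {C D : NConf} {F : NFlag} (hρ : ρ (C.cnt + 1) = ρ C.cnt + 1)
    (h : NFlagStep (C.ren ρ) F D) :
    ∃ F₀ C', NFlagStep C F₀ C' ∧ F = F₀.ren ρ ∧ D = C'.ren ρ := by
  rcases C with ⟨_ | _ | _ | _, _ | _, _⟩ | ⟨_ | _, _⟩ <;> cases h
  · exact ⟨_, _, .var, rfl, rfl⟩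
  · exact ⟨_, _, .var, rfl, rfl⟩
  · simp only [NConf.cnt] at hρ
    exact ⟨_, _, .lambda, rfl, by simp [NConf.ren, Term.ren_substT, Term.ren, Stack.ren, hρ]⟩
  · exact ⟨_, _, .enter, rfl, rfl⟩
  · exact ⟨_, _, .skip, rfl, rfl⟩

theorem nFinal_ren_iff {C : NConf} {F : NFlag} : NFinal (C.ren ρ) F ↔ NFinal C F := by
  constructor
  · intro h
    rcases C with ⟨⟩ | ⟨_ | _, _⟩ <;> cases h
    exact .done
  · rintro ⟨⟩
    exact .done

end Renaming

def RenamedMachineBisim (X Y : NConf) : Prop :=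
  ∃ ρ : ℕ → ℕ, ∃ C1 C2, MachineBisim NTau NFlagStep NFinal C1 C2 ∧
    (∀ n, C1.cnt ≤ n → ρ (n + 1) = ρ n + 1) ∧ (∀ n, C2.cnt ≤ n → ρ (n + 1) = ρ n + 1) ∧
    X = C1.ren ρ ∧ Y = C2.ren ρ

theorem RenamedMachineBisim.transfers {ρ : ℕ → ℕ} {C1 C2 : NConf}
    (h : MachineBisim NTau NFlagStep NFinal C1 C2)
    (h1 : ∀ n, C1.cnt ≤ n → ρ (n + 1) = ρ n + 1) (h2 : ∀ n, C2.cnt ≤ n → ρ (n + 1) = ρ n + 1) :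
    Transfers NTau NFlagStep NFinal RenamedMachineBisim (C1.ren ρ) (C2.ren ρ) := by
  refine ⟨fun F _ ⟨_, htau, hstep⟩ => ?_, fun F ⟨_, htau, hfinal⟩ => ?_⟩
  · obtain ⟨C, htau1, rfl⟩ := exists_nTaus_of_ren htau
    have hC := cnt_eq_of_nTaus htau1
    obtain ⟨F₀, C1', hstep1, rfl, rfl⟩ := hstep.exists_of_ren (h1 _ hC.ge)
    obtain ⟨C2', ⟨D, htau2, hstep2⟩, h'⟩ := h.match_flag ⟨C, htau1, hstep1⟩
    have hD := cnt_eq_of_nTaus htau2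
    refine ⟨C2'.ren ρ, ⟨D.ren ρ, nTaus_ren ρ htau2, hstep2.ren (h2 _ hD.ge)⟩,
      ρ, C1', C2', h', fun n hn => h1 n ?_, fun n hn => h2 n ?_, rfl, rfl⟩
    · exact hC ▸ hstep1.cnt_le.trans hn
    · exact hD ▸ hstep2.cnt_le.trans hn
  · obtain ⟨C, htau1, rfl⟩ := exists_nTaus_of_ren htau
    obtain ⟨D, htau2, hfinal2⟩ := h.match_final ⟨C, htau1, nFinal_ren_iff.1 hfinal⟩
    exact ⟨D.ren ρ, nTaus_ren ρ htau2, nFinal_ren_iff.2 hfinal2⟩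

theorem RenamedMachineBisim.isMachineBisim :
    IsMachineBisim NTau NFlagStep NFinal RenamedMachineBisim := by
  refine ⟨?_, ?_⟩
  · rintro _ _ ⟨ρ, C1, C2, h, h1, h2, rfl, rfl⟩
    exact ⟨ρ, C2, C1, h.symm, h2, h1, rfl, rfl⟩
  · rintro _ _ ⟨ρ, C1, C2, h, h1, h2, rfl, rfl⟩
    exact transfers h h1 h2

theorem MachineBisim.ren {ρ : ℕ → ℕ} {C1 C2 : NConf}
    (h : MachineBisim NTau NFlagStep NFinal C1 C2)
    (h1 : ∀ n, C1.cnt ≤ n → ρ (n + 1) = ρ n + 1) (h2 : ∀ n, C2.cnt ≤ n → ρ (n + 1) = ρ n + 1) :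
    MachineBisim NTau NFlagStep NFinal (C1.ren ρ) (C2.ren ρ) :=
  ⟨_, RenamedMachineBisim.isMachineBisim, ρ, C1, C2, h, h1, h2, rfl, rfl⟩

def FreshMachineBisim (u v : Term) : Prop :=
  ∃ m, u.fv ∪ v.fv ⊆ range m ∧ MachineBisim NTau NFlagStep NFinal (.ev u .nil m) (.ev v .nil m)

theorem FreshMachineBisim.substT_fvar {t s : Term} {m : ℕ} (ht : t.fv ⊆ range m)
    (hs : s.fv ⊆ range m)
    (h : MachineBisim NTau NFlagStep NFinal (.ev (t.substT 0 (.fvar m)) .nil (m + 1))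
      (.ev (s.substT 0 (.fvar m)) .nil (m + 1))) (f : ℕ) :
    FreshMachineBisim (t.substT 0 (.fvar f)) (s.substT 0 (.fvar f)) := by
  let ρ : ℕ → ℕ := fun g => if g = m then f else if g < m then g else g + f
  have hshift : ∀ n, m + 1 ≤ n → ρ (n + 1) = ρ n + 1 := by
    intro n hn
    simp only [ρ]
    split_ifs <;> omega
  have hren : ∀ u : Term, u.fv ⊆ range m →
      (u.substT 0 (.fvar m)).ren ρ = u.substT 0 (.fvar f) := by
    intro u hu
    rw [Term.ren_substT, Term.ren_eq_self fun g hg => ?_]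
    · simp [Term.ren, ρ]
    · have hg := mem_range.1 (hu hg)
      simp [ρ, hg, hg.ne]
  have hbound : ∀ u : Term, u.fv ⊆ range m → (u.substT 0 (.fvar f)).fv ⊆ range (m + 1 + f) :=
    fun u hu => Term.fv_substT_fvar_subset_range (hu.trans (range_subset_range.2 (by omega)))
      (by omega)
  refine ⟨m + 1 + f, union_subset (hbound t ht) (hbound s hs), ?_⟩
  have hρ : ρ (m + 1) = m + 1 + f := by simp [ρ]
  simpa only [NConf.ren, Stack.ren, hren t ht, hren s hs, hρ] using h.ren hshift hshift

theorem stackRel_of_machineBisim_cont {m : ℕ} {π π' : Stack}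
    (h : MachineBisim NTau NFlagStep NFinal (.cont π m) (.cont π' m))
    (hπ : π.fv ⊆ range m) (hπ' : π'.fv ⊆ range m) : StackRel FreshMachineBisim π π' := by
  induction π generalizing π' with
  | nil =>
    obtain ⟨_, htau, hfinal⟩ := h.match_final ⟨_, .refl, .done⟩
    obtain rfl := eq_of_nTaus_cont htau
    cases hfinal
    exact .nil
  | cons a ψ ih =>
    obtain ⟨_, ⟨_, htau, henter⟩, hhead⟩ := h.match_flag ⟨_, .refl, .enter⟩
    obtain rfl := eq_of_nTaus_cont htau
    cases henter with
    | @enter b ψ' =>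
      obtain ⟨_, ⟨_, htau, hskip⟩, htail⟩ := h.match_flag ⟨_, .refl, .skip⟩
      obtain rfl := eq_of_nTaus_cont htau
      cases hskip
      obtain ⟨ha, hψ⟩ := union_subset_iff.1 hπ
      obtain ⟨hb, hψ'⟩ := union_subset_iff.1 hπ'
      exact .cons ⟨m, union_subset ha hb, hhead⟩ (ih htail hψ hψ')

theorem FreshMachineBisim.isNFBisim : IsNFBisim FreshMachineBisim := by
  refine ⟨fun u v ⟨m, hm, h⟩ => ⟨m, union_comm u.fv v.fv ▸ hm, h.symm⟩,
    fun u v ⟨m, hm, h⟩ => ?_⟩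
  obtain ⟨hu, hv⟩ := union_subset_iff.1 hm
  refine ⟨fun t hu' => ?_, fun f π hu' => ?_⟩
  · obtain ⟨_, ⟨_, htau, hstep⟩, h'⟩ := h.match_flag ⟨_, hu'.nTaus m, .lambda⟩
    obtain ⟨_, _, rfl, hv'⟩ := kSteps_of_nTaus htau
    cases hstep with
    | @lambda s _ =>
      exact ⟨s, hv', fun f _ => substT_fvar (hu'.fv_lam_subset.trans hu)
        (hv'.fv_lam_subset.trans hv) h' f⟩
  · obtain ⟨_, ⟨_, htau, hstep⟩, h'⟩ := h.match_flag ⟨_, hu'.nTaus m, .var⟩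
    obtain ⟨_, π', rfl, hv'⟩ := kSteps_of_nTaus htau
    cases hstep
    exact ⟨π', hv', stackRel_of_machineBisim_cont h' (hu'.fv_stack_subset.trans hu)
      (hv'.fv_stack_subset.trans hv)⟩

theorem nf_bisim_iff_machine_bisim (t s : Term) :
    NFBisim t s ↔
      ∃ n : ℕ, (∀ f ∈ t.fv ∪ s.fv, f < n) ∧
        MachineBisim NTau NFlagStep NFinal (.ev t .nil n) (.ev s .nil n) := by
  simp only [← mem_range, ← subset_iff]
  refine ⟨fun ⟨R, hR, hts⟩ => ?_, fun h => ⟨FreshMachineBisim, FreshMachineBisim.isNFBisim, h⟩⟩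
  obtain ⟨n, hn⟩ := (t.fv ∪ s.fv).exists_nat_subset_range
  obtain ⟨ht, hs⟩ := union_subset_iff.1 hn
  exact ⟨n, hn, MachineRelOf R, MachineRelOf.isMachineBisim hR, .ev hts ht hs⟩
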